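/- For any base class F ⊆ {0,1}^{ {0,1}* } with finite VC dimension and any generation length T ≥ 1, the VC dimension of the end-to-end class F^{e2e(T)} is at most 6 · T · VCdim(F). -/

import Mathlib

def applyAppend (f : List Bool → Bool) (x : List Bool) : List Bool := x ++ [f x]

def cot (f : List Bool → Bool) (T : ℕ) (x : List Bool) : List Bool :=
  (applyAppend f)^[T] x

def e2e (f : List Bool → Bool) (T : ℕ) (x : List Bool) : Bool :=
  (cot f T x).getLastD false

def e2eClass (F : Set (List Bool → Bool)) (T : ℕ) : Set (List Bool → Bool) :=
  (fun f => e2e f T) '' F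

/-- `H` shatters some set of `d` points (VC-shattering). -/
def Shatters {X : Type*} (H : Set (X → Bool)) (d : ℕ) : Prop :=
  ∃ x : Fin d → X, ∀ b : Fin d → Bool, ∃ h ∈ H, ∀ i, h (x i) = b i

/-! The answer `f^{e2e(T)} x` depends only on the values of `f` at the strings `x ++ s` with
`|s| < T`, of which there are at most `2^T - 1`. Hence if `F^{e2e(T)}` shatters `n` points,
`F` has `2^n` distinct restrictions to a set of at most `n (2^T - 1)` strings, and the
Sauer–Shelah lemma gives `2^n ≤ ∑_{k ≤ D} C(n (2^T - 1), k) ≤ (e n 2^T / D)^D`. Since a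
shattering class also shatters fewer points, it suffices to refute this for `n = 6TD + 1`,
where the right-hand side is below `2^n`. -/

open Finset

theorem cot_succ (f : List Bool → Bool) (T : ℕ) (x : List Bool) :
    cot f (T + 1) x = cot f T (x ++ [f x]) :=
  Function.iterate_succ_apply _ _ _

theorem cot_congr {f g : List Bool → Bool} {T : ℕ} {x : List Bool}
    (h : ∀ s : List Bool, s.length < T → f (x ++ s) = g (x ++ s)) : cot f T x = cot g T x := by
  induction T generalizing x with
  | zero => rfl
  | succ T ih =>
    have hx : f x = g x := by simpa using h [] (Nat.succ_pos T)
    rw [cot_succ, cot_succ, ← hx]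
    refine ih fun s hs => ?_
    simpa using h (f x :: s) (Nat.succ_lt_succ hs)

theorem e2e_congr {f g : List Bool → Bool} {T : ℕ} {x : List Bool}
    (h : ∀ s : List Bool, s.length < T → f (x ++ s) = g (x ++ s)) : e2e f T x = e2e g T x := by
  rw [e2e, e2e, cot_congr h]

def shortLists (T : ℕ) : Finset (List Bool) :=
  (range T).biUnion fun n => univ.image (List.ofFn (n := n))

theorem mem_shortLists {T : ℕ} {s : List Bool} : s ∈ shortLists T ↔ s.length < T := by
  simp only [shortLists, mem_biUnion, mem_range, mem_image, mem_univ, true_and]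
  constructor
  · rintro ⟨n, hn, f, rfl⟩
    simpa using hn
  · exact fun hs => ⟨s.length, hs, s.get, List.ofFn_get s⟩

theorem card_shortLists_le (T : ℕ) : #(shortLists T) ≤ 2 ^ T - 1 :=
  calc #(shortLists T) ≤ ∑ n ∈ range T, #(univ.image (List.ofFn (n := n) (α := Bool))) :=
        card_biUnion_le
    _ ≤ ∑ n ∈ range T, 2 ^ n := sum_le_sum fun n _ => by
        simpa using card_image_le (s := (univ : Finset (Fin n → Bool)))
    _ = 2 ^ T - 1 := by simpa using Nat.geomSum_eq le_rfl T

theorem Shatters.mono {X : Type*} {H : Set (X → Bool)} {d d' : ℕ} (h : Shatters H d)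
    (hd : d' ≤ d) : Shatters H d' := by
  obtain ⟨x, hx⟩ := h
  refine ⟨x ∘ Fin.castLE hd, fun b => ?_⟩
  obtain ⟨g, hg, hgb⟩ := hx fun i => if hi : (i : ℕ) < d' then b ⟨i, hi⟩ else false
  exact ⟨g, hg, fun i => by simpa using hgb (Fin.castLE hd i)⟩

theorem shatters_card_of_forall_subset {X : Type*} {H : Set (X → Bool)} (s : Finset X)
    (h : ∀ t ⊆ s, ∃ g ∈ H, ∀ x ∈ s, g x = true ↔ x ∈ t) : Shatters H #s := by
  let e : Fin #s ↪ X := s.equivFin.symm.toEmbedding.trans (Function.Embedding.subtype _)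
  have he : ∀ i, e i ∈ s := fun i => (s.equivFin.symm i).2
  refine ⟨e, fun b => ?_⟩
  obtain ⟨g, hg, hgt⟩ := h ((univ.filter fun i => b i = true).map e) fun _ => by
    simp only [mem_map, mem_filter]
    rintro ⟨i, -, rfl⟩
    exact he i
  refine ⟨g, hg, fun i => Bool.eq_iff_iff.2 ?_⟩
  rw [hgt _ (he i)]
  simp

theorem card_le_sum_choose_of_injective_restrict {X ι : Type*} [Fintype ι] {H : Set (X → Bool)}
    {D : ℕ} (hH : ∀ d, Shatters H d → d ≤ D) (S : Finset X) (h : ι → X → Bool)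
    (hmem : ∀ i, h i ∈ H) (hinj : Function.Injective fun i (x : S) => h i x) :
    Fintype.card ι ≤ ∑ k ∈ Iic D, (#S).choose k := by
  classical
  let trace : ι → Finset S := fun i => univ.filter fun x => h i x = true
  have htrace : Function.Injective trace := fun i j hij =>
    hinj <| funext fun x => Bool.eq_iff_iff.2 <| by simpa [trace] using congrArg (x ∈ ·) hij
  let 𝒜 := univ.image trace
  have hvcDim : 𝒜.vcDim ≤ D := Finset.sup_le fun s hs => by
    rw [← card_map (Function.Embedding.subtype _)]
    refine hH _ (shatters_card_of_forall_subset _ fun t ht => ?_)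
    obtain ⟨u, hu, hsu⟩ := (mem_shatterer.1 hs) (filter_subset (fun y : S => y.1 ∈ t) s)
    obtain ⟨i, -, rfl⟩ := mem_image.1 hu
    refine ⟨h i, hmem i, fun x hx => ?_⟩
    obtain ⟨y, hy, rfl⟩ := mem_map.1 hx
    simpa [trace, hy] using congrArg (y ∈ ·) hsu
  calc Fintype.card ι = #𝒜 := (card_image_of_injective _ htrace).symm
    _ ≤ #𝒜.shatterer := card_le_card_shatterer _
    _ ≤ ∑ k ∈ Iic 𝒜.vcDim, (Fintype.card S).choose k := card_shatterer_le_sum_vcDim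
    _ ≤ ∑ k ∈ Iic D, (#S).choose k := by
      rw [Fintype.card_coe]
      exact sum_le_sum_of_subset (Iic_subset_Iic.2 hvcDim)

theorem sum_Iic_choose_le_exp_mul_div_pow {D m : ℕ} (hD : 1 ≤ D) (hDm : D ≤ m) :
    (∑ k ∈ Iic D, m.choose k : ℝ) ≤ (Real.exp 1 * m / D) ^ D := by
  have hm₀ : (0 : ℝ) < m := by exact_mod_cast hD.trans hDm
  set q : ℝ := D / m
  have hq₀ : 0 ≤ q := by positivity
  have hq₁ : q ≤ 1 := div_le_one_of_le₀ (by exact_mod_cast hDm) hm₀.le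
  calc (∑ k ∈ Iic D, m.choose k : ℝ)
      ≤ ∑ k ∈ Iic D, q⁻¹ ^ D * (q ^ k * m.choose k) := sum_le_sum fun k hk => by
        have : 1 ≤ q⁻¹ ^ D * q ^ k :=
          calc (1 : ℝ) = q⁻¹ ^ D * q ^ D := by rw [inv_pow, inv_mul_cancel₀ (by positivity)]
            _ ≤ q⁻¹ ^ D * q ^ k :=
              mul_le_mul_of_nonneg_left (pow_le_pow_of_le_one hq₀ hq₁ (mem_Iic.1 hk))
                (by positivity)
        simpa only [mul_assoc] using le_mul_of_one_le_left (Nat.cast_nonneg _) this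
    _ ≤ q⁻¹ ^ D * ∑ k ∈ range (m + 1), q ^ k * m.choose k := by
        rw [← mul_sum]
        refine mul_le_mul_of_nonneg_left (sum_le_sum_of_subset_of_nonneg ?_ ?_) (by positivity)
        · exact fun k hk => mem_range.2 (Nat.lt_succ_of_le ((mem_Iic.1 hk).trans hDm))
        · exact fun _ _ _ => by positivity
    _ = q⁻¹ ^ D * (q + 1) ^ m := by simp only [add_pow, one_pow, mul_one]
    _ ≤ q⁻¹ ^ D * Real.exp q ^ m := by
        gcongr
        exact Real.add_one_le_exp q
    _ = (Real.exp 1 * m / D) ^ D := by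
        rw [← Real.exp_nat_mul, mul_div_cancel₀ _ hm₀.ne', ← mul_one (D : ℝ),
          Real.exp_nat_mul, mul_one, ← mul_pow, inv_div]
        ring

theorem sum_Iic_choose_lt_two_pow (T D : ℕ) :
    ∑ k ∈ Iic D, ((6 * T * D + 1) * (2 ^ T - 1)).choose k < 2 ^ (6 * T * D + 1) := by
  rcases Nat.eq_zero_or_pos T with rfl | hT
  · rw [sum_eq_single_of_mem 0 (mem_Iic.2 D.zero_le) fun k _ hk => by
      simpa using Nat.choose_eq_zero_of_lt (Nat.pos_of_ne_zero hk)]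
    simp
  rcases Nat.eq_zero_or_pos D with rfl | hD
  · simp [Iic_eq_Icc]
  set n := 6 * T * D + 1
  have hn : (n : ℝ) ≤ 7 * T * D := by
    have : n ≤ 7 * T * D := by simp only [n]; nlinarith [Nat.mul_pos hT hD]
    exact_mod_cast this
  have hbernoulli : (21 * T : ℝ) ≤ 32 ^ T := by
    have := one_add_mul_le_pow (a := (31 : ℝ)) (by norm_num) T
    norm_num at this
    linarith
  have hbase : Real.exp 1 * ↑(n * 2 ^ T) / D ≤ 2 ^ (6 * T) := by
    rw [div_le_iff₀ (by exact_mod_cast hD), pow_mul, show (2 : ℝ) ^ 6 = 32 * 2 by norm_num,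
      mul_pow, Nat.cast_mul, Nat.cast_pow, Nat.cast_ofNat]
    calc Real.exp 1 * (n * 2 ^ T) ≤ 3 * (7 * T * D) * 2 ^ T := by
          rw [← mul_assoc]
          gcongr
          exact (Real.exp_one_lt_d9.trans (by norm_num)).le
      _ = 21 * T * D * 2 ^ T := by ring
      _ ≤ 32 ^ T * D * 2 ^ T := by gcongr
      _ = 32 ^ T * 2 ^ T * D := by ring
  have hDn : D ≤ n * 2 ^ T :=
    le_trans (by simp only [n]; nlinarith) (Nat.le_mul_of_pos_right n (by positivity))
  have hreal : (∑ k ∈ Iic D, (n * 2 ^ T).choose k : ℝ) < 2 ^ n :=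
    calc (∑ k ∈ Iic D, (n * 2 ^ T).choose k : ℝ)
        ≤ (Real.exp 1 * ↑(n * 2 ^ T) / D) ^ D := sum_Iic_choose_le_exp_mul_div_pow hD hDn
      _ ≤ (2 ^ (6 * T)) ^ D := by gcongr
      _ = 2 ^ (6 * T * D) := (pow_mul 2 (6 * T) D).symm
      _ < 2 ^ n := pow_lt_pow_right₀ one_lt_two (Nat.lt_succ_self _)
  calc ∑ k ∈ Iic D, (n * (2 ^ T - 1)).choose k
      ≤ ∑ k ∈ Iic D, (n * 2 ^ T).choose k :=
        sum_le_sum fun k _ => Nat.choose_le_choose k (Nat.mul_le_mul_left n (Nat.sub_le _ _))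
    _ < 2 ^ n := by exact_mod_cast hreal

theorem two_pow_le_sum_choose_of_shatters_e2eClass {F : Set (List Bool → Bool)} {D T n : ℕ}
    (hF : ∀ d, Shatters F d → d ≤ D) (h : Shatters (e2eClass F T) n) :
    2 ^ n ≤ ∑ k ∈ Iic D, (n * (2 ^ T - 1)).choose k := by
  obtain ⟨x, hx⟩ := h
  have hlift : ∀ b : Fin n → Bool, ∃ f ∈ F, ∀ i, e2e f T (x i) = b i := fun b => by
    obtain ⟨_, ⟨f, hf, rfl⟩, hfb⟩ := hx b
    exact ⟨f, hf, hfb⟩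
  choose φ hφF hφ using hlift
  let S := univ.biUnion fun i => (shortLists T).image (x i ++ ·)
  have hS : ∀ i s, s.length < T → x i ++ s ∈ S := fun i s hs =>
    mem_biUnion.2 ⟨i, mem_univ i, mem_image_of_mem _ (mem_shortLists.2 hs)⟩
  have hinj : Function.Injective fun b (q : S) => φ b q := fun b b' hbb' => funext fun i => by
    rw [← hφ b i, ← hφ b' i]
    exact e2e_congr fun s hs => congrFun hbb' ⟨_, hS i s hs⟩
  have hcard : #S ≤ n * (2 ^ T - 1) :=
    calc #S ≤ ∑ i : Fin n, #((shortLists T).image (x i ++ ·)) := card_biUnion_le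
      _ ≤ ∑ _i : Fin n, (2 ^ T - 1) :=
        sum_le_sum fun _ _ => card_image_le.trans (card_shortLists_le T)
      _ = n * (2 ^ T - 1) := by simp
  calc 2 ^ n = Fintype.card (Fin n → Bool) := by simp
    _ ≤ ∑ k ∈ Iic D, (#S).choose k :=
      card_le_sum_choose_of_injective_restrict hF S φ hφF hinj
    _ ≤ ∑ k ∈ Iic D, (n * (2 ^ T - 1)).choose k :=
      sum_le_sum fun k _ => Nat.choose_le_choose k hcard

theorem vcDim_e2eClass_le_general (F : Set (List Bool → Bool)) (D T : ℕ)
    (hDmax : ∀ d, Shatters F d → d ≤ D) :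
    ∀ d, Shatters (e2eClass F T) d → d ≤ 6 * T * D := by
  intro d hd
  by_contra! hlt
  have hshatters := hd.mono (Nat.succ_le_of_lt hlt)
  exact (two_pow_le_sum_choose_of_shatters_e2eClass hDmax hshatters).not_gt
    (sum_Iic_choose_lt_two_pow T D)

/-- if `F` has finite VC dimension `D` (witnessed by a shattered set of
size `D` and no shattered set larger than `D`), then for every `T ≥ 1` the
VC dimension of the end-to-end class is at most `6·T·D`: no set of more than
`6·T·D` points is shattered by `F^{e2e(T)}`. -/
theorem vcDim_e2eClass_le (F : Set (List Bool → Bool)) (D T : ℕ) (hT : 1 ≤ T)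
    (hD : Shatters F D) (hDmax : ∀ d, Shatters F d → d ≤ D) :
    ∀ d, Shatters (e2eClass F T) d → d ≤ 6 * T * D :=
  vcDim_e2eClass_le_general F D T hDmax
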